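/- arXiv:2509.14006 — 2 statements merged into one kernel-verified Lean document; each statement's English description precedes it below -/
import Mathlib

section
/- For every s ≥ 1, the number of 2s×2s ASMs with an s×s frozen square of zeroes in the top-left corner equals (A_s)^2, the square of the number of s×s ASMs. -/
open Finset

/-- An alternating sign matrix: entries in {0,1,-1}, and in each row and column
the nonzero entries alternate in sign and sum to 1 (equivalently, all partial
sums along each row and column are 0 or 1, and total sums are 1). -/
def IsASM {n : ℕ} (a : Matrix (Fin n) (Fin n) ℤ) : Prop :=
  (∀ i j, a i j = 0 ∨ a i j = 1 ∨ a i j = -1) ∧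
  (∀ i k, (∑ j ∈ Finset.Iic k, a i j) = 0 ∨ (∑ j ∈ Finset.Iic k, a i j) = 1) ∧
  (∀ i, (∑ j, a i j) = 1) ∧
  (∀ j k, (∑ i ∈ Finset.Iic k, a i j) = 0 ∨ (∑ i ∈ Finset.Iic k, a i j) = 1) ∧
  (∀ j, (∑ i, a i j) = 1)

/-- `A_n`: the number of `n × n` ASMs. -/
noncomputable def ASMCount (n : ℕ) : ℕ := Set.ncard {a : Matrix (Fin n) (Fin n) ℤ | IsASM a}

/-- `A_{n,r}` (0-based `r`): number of `n × n` ASMs whose unique 1 of the first row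
is in column `r`. -/
noncomputable def ASMRefined (n : ℕ) (r : Fin n) : ℕ :=
  Set.ncard {a : Matrix (Fin n) (Fin n) ℤ | IsASM a ∧ a ⟨0, r.pos⟩ r = 1}

/-- `B_{n,s}`: number of `n × n` ASMs with an `s × s` square of zeroes in the
top-left corner. -/
noncomputable def ASMFrozen (n s : ℕ) : ℕ :=
  Set.ncard {a : Matrix (Fin n) (Fin n) ℤ |
    IsASM a ∧ ∀ i j : Fin n, (i : ℕ) < s → (j : ℕ) < s → a i j = 0}


/-!
If the top-left `s × s` block of a `2s × 2s` ASM vanishes, its first `s` rows carry their unit row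
sums in the top-right block `B` and its first `s` columns carry theirs in the bottom-left block `C`.
The column sums of `B` are partial column sums of the ASM, hence at most `1`, while they add up to
`s`; so every column of `B` sums to `1`, and symmetrically every row of `C` does. Consequently the
bottom-right block `D` has zero column sums and nonpositive partial row sums, which forces `D = 0`.
Thus the ASMs in question are exactly the block matrices `[[0, B], [C, 0]]` with `B`, `C` ASMs.
-/

open Matrix

namespace Fin

variable {M : Type*} [AddCommMonoid M] {m n : ℕ}

theorem sum_Iic_natAdd (f : Fin (m + n) → M) (k : Fin n) :
    ∑ j ∈ Iic (natAdd m k), f j = ∑ j, f (castAdd n j) + ∑ j ∈ Iic k, f (natAdd m j) := by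
  rw [← filter_ge_eq_Iic, ← filter_ge_eq_Iic, sum_filter, sum_filter, sum_univ_add]
  simp only [le_def, val_castAdd, val_natAdd, add_le_add_iff_left]
  congr 1
  exact Fintype.sum_congr _ _ fun j => if_pos (by omega)

end Fin

theorem eq_zero_of_forall_sum_Iic_eq_zero {α M : Type*} [LinearOrder α] [LocallyFiniteOrderBot α]
    [WellFoundedLT α] [AddCommGroup M] {f : α → M} (h : ∀ k, ∑ j ∈ Iic k, f j = 0) : f = 0 := by
  funext k
  induction k using WellFoundedLT.induction with
  | _ k ih =>
    have hlt : ∑ j ∈ Iio k, f j = 0 := sum_eq_zero fun j hj => ih j (mem_Iio.1 hj)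
    simpa [← Iio_insert, hlt] using h k

theorem Matrix.sum_col_eq_one_of_sum_row_eq_one {ι κ : Type*} [Fintype ι] [Fintype κ]
    {M : Matrix ι κ ℤ} (hcard : Fintype.card κ ≤ Fintype.card ι) (hrow : ∀ i, ∑ j, M i j = 1)
    (hcol : ∀ j, ∑ i, M i j ≤ 1) (j : κ) : ∑ i, M i j = 1 := by
  have htotal : ∑ j, ∑ i, M i j = ∑ _j : κ, 1 := by
    refine le_antisymm (sum_le_sum fun j _ => hcol j) ?_
    rw [sum_comm, sum_congr rfl fun i _ => hrow i]
    simpa using hcard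
  exact (sum_eq_sum_iff_of_le fun j _ => hcol j).1 htotal j (mem_univ j)

theorem Matrix.eq_zero_of_sum_Iic_nonpos {ι : Type*} [Fintype ι] {n : ℕ} {D : Matrix ι (Fin n) ℤ}
    (hrow : ∀ i k, ∑ j ∈ Iic k, D i j ≤ 0) (hcol : ∀ j, ∑ i, D i j = 0) : D = 0 := by
  funext i
  refine eq_zero_of_forall_sum_Iic_eq_zero fun k => ?_
  have htotal : ∑ i, ∑ j ∈ Iic k, D i j = 0 := sum_comm.trans (sum_eq_zero fun j _ => hcol j)
  exact (sum_eq_zero_iff_of_nonpos fun i _ => hrow i k).1 htotal i (mem_univ i)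

section Alternating

variable {ι : Type*} {m n : ℕ}

def HasAlternatingRows (a : Matrix ι (Fin n) ℤ) : Prop :=
  (∀ i k, (∑ j ∈ Iic k, a i j) = 0 ∨ (∑ j ∈ Iic k, a i j) = 1) ∧ ∀ i, ∑ j, a i j = 1

theorem isASM_iff {a : Matrix (Fin n) (Fin n) ℤ} :
    IsASM a ↔ (∀ i j, a i j = 0 ∨ a i j = 1 ∨ a i j = -1) ∧
      HasAlternatingRows a ∧ HasAlternatingRows aᵀ :=
  ⟨fun ⟨he, hr, ht, hcr, hct⟩ => ⟨he, ⟨hr, ht⟩, hcr, hct⟩,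
    fun ⟨he, ⟨hr, ht⟩, hcr, hct⟩ => ⟨he, hr, ht, hcr, hct⟩⟩

theorem IsASM.transpose {a : Matrix (Fin n) (Fin n) ℤ} (ha : IsASM a) : IsASM aᵀ := by
  obtain ⟨he, hr, hc⟩ := isASM_iff.1 ha
  exact isASM_iff.2 ⟨fun i j => he j i, hc, hr⟩

namespace HasAlternatingRows

theorem submatrix_left {κ : Type*} {a : Matrix ι (Fin n) ℤ} (h : HasAlternatingRows a)
    (f : κ → ι) : HasAlternatingRows (a.submatrix f id) :=
  ⟨fun i k => h.1 (f i) k, fun i => h.2 (f i)⟩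

variable {a : Matrix ι (Fin (m + n)) ℤ}

theorem sum_castAdd_le_one (h : HasAlternatingRows a) (i : ι) :
    ∑ j : Fin m, a i (Fin.castAdd n j) ≤ 1 := by
  rcases m with _ | m
  · simp
  · have := h.1 i (Fin.castAdd n ⊤)
    rw [Fin.sum_Iic_castAdd, Iic_top] at this
    omega

theorem submatrix_natAdd (h : HasAlternatingRows a) (h0 : ∀ i j, a i (Fin.castAdd n j) = 0) :
    HasAlternatingRows (a.submatrix id (Fin.natAdd m)) := by
  have hleft : ∀ i, ∑ j, a i (Fin.castAdd n j) = 0 := fun i => sum_eq_zero fun j _ => h0 i j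
  refine ⟨fun i k => ?_, fun i => ?_⟩
  · simpa [Fin.sum_Iic_natAdd, hleft] using h.1 i (Fin.natAdd m k)
  · simpa [Fin.sum_univ_add, hleft] using h.2 i

end HasAlternatingRows

end Alternating

section Blocks

variable {α : Type*} [Zero α] {m n : ℕ}

def antidiagBlocks (B : Matrix (Fin m) (Fin n) α) (C : Matrix (Fin n) (Fin m) α) :
    Matrix (Fin (m + n)) (Fin (m + n)) α :=
  reindex finSumFinEquiv finSumFinEquiv (fromBlocks 0 B C 0)

variable (B : Matrix (Fin m) (Fin n) α) (C : Matrix (Fin n) (Fin m) α) (i : Fin m) (j : Fin n)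

@[simp] theorem antidiagBlocks_castAdd_castAdd (i' : Fin m) :
    antidiagBlocks B C (Fin.castAdd n i) (Fin.castAdd n i') = 0 := by
  simp [antidiagBlocks]

@[simp] theorem antidiagBlocks_castAdd_natAdd :
    antidiagBlocks B C (Fin.castAdd n i) (Fin.natAdd m j) = B i j := by
  simp [antidiagBlocks]

@[simp] theorem antidiagBlocks_natAdd_castAdd :
    antidiagBlocks B C (Fin.natAdd m j) (Fin.castAdd n i) = C j i := by
  simp [antidiagBlocks]

@[simp] theorem antidiagBlocks_natAdd_natAdd (j' : Fin n) :
    antidiagBlocks B C (Fin.natAdd m j) (Fin.natAdd m j') = 0 := by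
  simp [antidiagBlocks]

theorem transpose_antidiagBlocks : (antidiagBlocks B C)ᵀ = antidiagBlocks Cᵀ Bᵀ := by
  simp [antidiagBlocks, fromBlocks_transpose]

theorem antidiagBlocks_injective :
    Function.Injective fun p : Matrix (Fin m) (Fin n) α × Matrix (Fin n) (Fin m) α =>
      antidiagBlocks p.1 p.2 := by
  rintro ⟨B, C⟩ ⟨B', C'⟩ h
  obtain ⟨-, hB, hC, -⟩ := fromBlocks_inj.1 ((reindex _ _).injective h)
  exact Prod.ext hB hC

end Blocks

theorem hasAlternatingRows_antidiagBlocks {m n : ℕ} {B : Matrix (Fin m) (Fin n) ℤ}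
    {C : Matrix (Fin n) (Fin m) ℤ} (hB : HasAlternatingRows B) (hC : HasAlternatingRows C) :
    HasAlternatingRows (antidiagBlocks B C) := by
  refine ⟨fun i k => ?_, fun i => ?_⟩
  · induction i using Fin.addCases <;> induction k using Fin.addCases <;>
      simp [Fin.sum_Iic_castAdd, Fin.sum_Iic_natAdd, hB.1, hC.1, hC.2]
  · induction i using Fin.addCases <;> simp [Fin.sum_univ_add, hB.2, hC.2]

theorem isASM_antidiagBlocks {s : ℕ} {B C : Matrix (Fin s) (Fin s) ℤ} (hB : IsASM B)
    (hC : IsASM C) : IsASM (antidiagBlocks B C) := by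
  obtain ⟨hBe, hBr, hBc⟩ := isASM_iff.1 hB
  obtain ⟨hCe, hCr, hCc⟩ := isASM_iff.1 hC
  refine isASM_iff.2 ⟨fun i j => ?_, hasAlternatingRows_antidiagBlocks hBr hCr, ?_⟩
  -- simp would rewrite `natAdd s` to `addNat s` here, out of reach of the block lemmas
  · induction i using Fin.addCases <;> induction j using Fin.addCases <;>
      simp [hBe, hCe, -Fin.natAdd_eq_addNat]
  · rw [transpose_antidiagBlocks]
    exact hasAlternatingRows_antidiagBlocks hCc hBc

namespace IsASM

variable {s : ℕ} {a : Matrix (Fin (s + s)) (Fin (s + s)) ℤ}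

theorem submatrix_castAdd_natAdd (ha : IsASM a)
    (h0 : ∀ i j, a (Fin.castAdd s i) (Fin.castAdd s j) = 0) :
    IsASM (a.submatrix (Fin.castAdd s) (Fin.natAdd s)) := by
  obtain ⟨he, hrow, hcol⟩ := isASM_iff.1 ha
  have hBrow : HasAlternatingRows (a.submatrix (Fin.castAdd s) (Fin.natAdd s)) :=
    (hrow.submatrix_left (Fin.castAdd s)).submatrix_natAdd h0
  refine isASM_iff.2 ⟨fun i j => he _ _, hBrow, fun j k => ?_, fun j => ?_⟩
  · have := hcol.1 (Fin.natAdd s j) (Fin.castAdd s k)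
    rwa [Fin.sum_Iic_castAdd] at this
  · exact sum_col_eq_one_of_sum_row_eq_one le_rfl hBrow.2
      (fun j => hcol.sum_castAdd_le_one (Fin.natAdd s j)) j

theorem submatrix_natAdd_castAdd (ha : IsASM a)
    (h0 : ∀ i j, a (Fin.castAdd s i) (Fin.castAdd s j) = 0) :
    IsASM (a.submatrix (Fin.natAdd s) (Fin.castAdd s)) :=
  (ha.transpose.submatrix_castAdd_natAdd fun i j => h0 j i).transpose

theorem submatrix_natAdd_natAdd_eq_zero (ha : IsASM a)
    (h0 : ∀ i j, a (Fin.castAdd s i) (Fin.castAdd s j) = 0) :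
    a.submatrix (Fin.natAdd s) (Fin.natAdd s) = 0 := by
  obtain ⟨-, hrow, hcol⟩ := isASM_iff.1 ha
  have hBcol : ∀ j, ∑ i, a (Fin.castAdd s i) (Fin.natAdd s j) = 1 :=
    (isASM_iff.1 (ha.submatrix_castAdd_natAdd h0)).2.2.2
  have hCrow : ∀ i, ∑ j, a (Fin.natAdd s i) (Fin.castAdd s j) = 1 :=
    (isASM_iff.1 (ha.submatrix_natAdd_castAdd h0)).2.1.2
  refine eq_zero_of_sum_Iic_nonpos (fun i k => ?_) fun j => ?_
  · have := hrow.1 (Fin.natAdd s i) (Fin.natAdd s k)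
    rw [Fin.sum_Iic_natAdd, hCrow i] at this
    simp only [submatrix_apply]
    omega
  · have : ∑ i, a i (Fin.natAdd s j) = 1 := hcol.2 (Fin.natAdd s j)
    rw [Fin.sum_univ_add, hBcol j] at this
    simp only [submatrix_apply]
    omega

theorem eq_antidiagBlocks (ha : IsASM a)
    (h0 : ∀ i j, a (Fin.castAdd s i) (Fin.castAdd s j) = 0) :
    a = antidiagBlocks (a.submatrix (Fin.castAdd s) (Fin.natAdd s))
      (a.submatrix (Fin.natAdd s) (Fin.castAdd s)) := by
  have hD := congr_fun₂ (ha.submatrix_natAdd_natAdd_eq_zero h0)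
  ext i j
  induction i using Fin.addCases <;> induction j using Fin.addCases <;>
    simp_all [-Fin.natAdd_eq_addNat]

end IsASM

theorem frozen_iff_castAdd {m n : ℕ} {a : Matrix (Fin (m + n)) (Fin (m + n)) ℤ} :
    (∀ i j : Fin (m + n), (i : ℕ) < m → (j : ℕ) < m → a i j = 0) ↔
      ∀ i j : Fin m, a (Fin.castAdd n i) (Fin.castAdd n j) = 0 :=
  ⟨fun h i j => h _ _ i.isLt j.isLt, fun h i j hi hj => h ⟨i, hi⟩ ⟨j, hj⟩⟩

theorem asm_frozen_half_general (s : ℕ) :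
    ASMFrozen (2 * s) s = (ASMCount s) ^ 2 := by
  have himage : {a : Matrix (Fin (s + s)) (Fin (s + s)) ℤ |
      IsASM a ∧ ∀ i j : Fin (s + s), (i : ℕ) < s → (j : ℕ) < s → a i j = 0} =
      (fun p => antidiagBlocks p.1 p.2) '' ({B | IsASM B} ×ˢ {C | IsASM C}) := by
    ext a
    simp only [frozen_iff_castAdd, Set.mem_ofPred_eq, Set.mem_image, Set.mem_prod, Prod.exists]
    constructor
    · rintro ⟨ha, h0⟩
      exact ⟨_, _, ⟨ha.submatrix_castAdd_natAdd h0, ha.submatrix_natAdd_castAdd h0⟩,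
        (ha.eq_antidiagBlocks h0).symm⟩
    · rintro ⟨B, C, ⟨hB, hC⟩, rfl⟩
      exact ⟨isASM_antidiagBlocks hB hC, by simp⟩
  rw [ASMFrozen, two_mul, himage, Set.ncard_image_of_injective _ antidiagBlocks_injective,
    Set.ncard_prod, ASMCount, sq]

theorem asm_frozen_half (s : ℕ) (hs : 1 ≤ s) :
    ASMFrozen (2 * s) s = (ASMCount s) ^ 2 :=
  asm_frozen_half_general s
end

section
/- The map sending an n×n ASM a to the triangular array t, where t_{i,1} < t_{i,2} < ... < t_{i,i} are the positions j at which the partial column sums b_{ij} = ∑_{l=1}^{i} a_{lj} equal 1, is a bijection from n×n ASMs to monotone triangles of size n. -/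
/-!
Write `b i c = ∑_{l ≤ i} a l c` for the partial column sums of `a`. For an ASM every `b i c` is
`0` or `1`, and row `i` of `b` has exactly `i + 1` ones because the rows of `a` sum to `1`; row `i`
of the triangle enumerates their positions increasingly. The number of entries `≤ m` in row `i` of
the triangle is `∑_{c < m} b i c`, so the difference of these counts for rows `i + 1` and `i` is the
partial row sum `∑_{c < m} a (i + 1) c`. Two increasing sequences of lengths `k` and `k + 1`
interlace exactly when, below every threshold, the longer one has as many terms as the shorter one
or one more. Hence partial row sums in `{0, 1}` amount to interlacing rows. Conversely, a monotone
triangle prescribes `b` as the indicator of its rows, and `a` is recovered as the difference of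
consecutive rows of `b`.
-/

open Finset

/-- A monotone triangle of size `n`: rows strictly increasing, consecutive rows
weakly interlacing, bottom row `1,2,…,n`. Row `i` (0-based) has `i+1` entries. -/
def IsMonotoneTriangle {n : ℕ} (t : (i : Fin n) → Fin ((i : ℕ) + 1) → ℕ) : Prop :=
  (∀ (i : Fin n) (j k : Fin ((i : ℕ) + 1)), j < k → t i j < t i k) ∧
  (∀ (i : Fin n) (h : (i : ℕ) + 1 < n) (j : Fin ((i : ℕ) + 1)),
    t ⟨(i : ℕ) + 1, h⟩ ⟨j.1, Nat.lt_succ_of_lt j.isLt⟩ ≤ t i j ∧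
    t i j ≤ t ⟨(i : ℕ) + 1, h⟩ ⟨j.1 + 1, Nat.succ_lt_succ j.isLt⟩) ∧
  (∀ i : Fin n, (i : ℕ) = n - 1 → ∀ j, t i j = (j : ℕ) + 1)

/-- `t` is the triangular array associated to the ASM `a`: row `i` of `t` lists,
in increasing order, the (1-based) columns `c` where the partial column sum
`∑_{l ≤ i} a l c` equals 1. -/
def AssocTriangle {n : ℕ} (a : Matrix (Fin n) (Fin n) ℤ)
    (t : (i : Fin n) → Fin ((i : ℕ) + 1) → ℕ) : Prop :=
  (∀ (i : Fin n) (j k : Fin ((i : ℕ) + 1)), j < k → t i j < t i k) ∧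
  (∀ (i : Fin n) (c : Fin n),
    (∑ l ∈ Finset.Iic i, a l c) = 1 ↔ ∃ j, t i j = (c : ℕ) + 1)

section Interlacing

variable {α : Type*} [LinearOrder α] {k : ℕ}

theorem StrictMono.lt_card_filter_le_iff {f : Fin k → α} (hf : StrictMono f) (j : Fin k)
    (m : α) : (j : ℕ) < #{i | f i ≤ m} ↔ f j ≤ m := by
  constructor
  · intro hj
    by_contra! hmj
    have hsub : ({i | f i ≤ m} : Finset (Fin k)) ⊆ Iio j := fun i hi =>
      mem_Iio.2 (hf.lt_iff_lt.1 ((mem_filter.1 hi).2.trans_lt hmj))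
    have := card_le_card hsub
    rw [Fin.card_Iio] at this
    omega
  · intro hjm
    have hsub : Iic j ⊆ ({i | f i ≤ m} : Finset (Fin k)) := fun i hi =>
      mem_filter.2 ⟨mem_univ i, (hf.monotone (mem_Iic.1 hi)).trans hjm⟩
    have := card_le_card hsub
    rw [Fin.card_Iic] at this
    omega

theorem StrictMono.interlace_iff_card_filter_le {f : Fin k → α} {g : Fin (k + 1) → α}
    (hf : StrictMono f) (hg : StrictMono g) :
    (∀ j, g j.castSucc ≤ f j ∧ f j ≤ g j.succ) ↔
      ∀ m, #{j | f j ≤ m} ≤ #{j | g j ≤ m} ∧ #{j | g j ≤ m} ≤ #{j | f j ≤ m} + 1 := by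
  have hcard_f (m : α) : #{j | f j ≤ m} ≤ k := card_le_univ _ |>.trans_eq (Fintype.card_fin k)
  have hcard_g (m : α) : #{j | g j ≤ m} ≤ k + 1 :=
    card_le_univ _ |>.trans_eq (Fintype.card_fin _)
  constructor
  · intro h m
    constructor
    · by_contra! hlt
      set j : Fin k := ⟨#{j | g j ≤ m}, hlt.trans_le (hcard_f m)⟩
      have hfj : f j ≤ m := (hf.lt_card_filter_le_iff j m).1 hlt
      exact lt_irrefl _ <| (hg.lt_card_filter_le_iff j.castSucc m).2 ((h j).1.trans hfj)
    · by_contra! hlt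
      set j : Fin k := ⟨#{j | f j ≤ m}, by have := hcard_g m; omega⟩
      have hgj : g j.succ ≤ m := (hg.lt_card_filter_le_iff j.succ m).1 (by simpa using hlt)
      exact lt_irrefl _ <| (hf.lt_card_filter_le_iff j m).2 ((h j).2.trans hgj)
  · intro h j
    constructor
    · have := (hf.lt_card_filter_le_iff j (f j)).2 le_rfl
      exact (hg.lt_card_filter_le_iff j.castSucc (f j)).1 (this.trans_le (h (f j)).1)
    · have hj := (hg.lt_card_filter_le_iff j.succ (g j.succ)).2 le_rfl
      have := (h (g j.succ)).2
      rw [Fin.val_succ] at hj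
      exact (hf.lt_card_filter_le_iff j (g j.succ)).1 (by omega)

end Interlacing

theorem Finset.sum_eq_card_filter_eq_one {ι : Type*} {s : Finset ι} {v : ι → ℤ}
    (h : ∀ i ∈ s, v i = 0 ∨ v i = 1) : ∑ i ∈ s, v i = #{i ∈ s | v i = 1} := by
  rw [← sum_boole]
  refine sum_congr rfl fun i hi => ?_
  rcases h i hi with h | h <;> simp [h]

theorem Finset.eq_of_sum_Iic_eq {α M : Type*} [PartialOrder α] [LocallyFiniteOrderBot α]
    [WellFoundedLT α] [AddCommGroup M] {f g : α → M}
    (h : ∀ i, ∑ l ∈ Iic i, f l = ∑ l ∈ Iic i, g l) : f = g := by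
  classical
  funext i
  induction i using WellFoundedLT.induction with
  | ind i ih =>
    have hIio : ∑ l ∈ Iio i, f l = ∑ l ∈ Iio i, g l :=
      sum_congr rfl fun l hl => ih l (mem_Iio.1 hl)
    have := h i
    rw [← Iio_insert, sum_insert notMem_Iio_self, sum_insert notMem_Iio_self, hIio] at this
    exact add_right_cancel this

theorem card_filter_exists_eq_add_one {n k : ℕ} {f : Fin k → ℕ} (hf : Function.Injective f)
    (hbound : ∀ j, 1 ≤ f j ∧ f j ≤ n) (m : ℕ) :
    #{c : Fin n | c.val < m ∧ ∃ j, f j = c + 1} = #{j | f j ≤ m} := by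
  symm
  refine card_bij (fun j _ => ⟨f j - 1, by have := hbound j; omega⟩) ?_ ?_ ?_
  · intro j hj
    have := hbound j
    simp only [mem_filter, mem_univ, true_and] at hj ⊢
    exact ⟨by omega, j, by omega⟩
  · intro j _ j' _ hjj'
    have := hbound j
    have := hbound j'
    exact hf (by simp only [Fin.mk.injEq] at hjj'; omega)
  · intro c hc
    simp only [mem_filter, mem_univ, true_and] at hc
    obtain ⟨hcm, j, hj⟩ := hc
    exact ⟨j, by simp only [mem_filter, mem_univ, true_and]; omega, Fin.ext (by simp; omega)⟩

section Fin

variable {n : ℕ} {M : Type*} [AddCommGroup M]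

theorem Fin.sum_Iic_mk_zero (f : Fin n → M) (h : 0 < n) : ∑ l ∈ Iic ⟨0, h⟩, f l = f ⟨0, h⟩ := by
  rw [show Iic (⟨0, h⟩ : Fin n) = {⟨0, h⟩} by ext l; simp [Fin.le_def, Fin.ext_iff], sum_singleton]

theorem Fin.sum_Iic_mk_add_one_sub (f : Fin n → M) (i : Fin n) (h : (i : ℕ) + 1 < n) :
    ∑ l ∈ Iic ⟨i + 1, h⟩, f l - ∑ l ∈ Iic i, f l = f ⟨i + 1, h⟩ := by
  have : Iic (⟨i + 1, h⟩ : Fin n) = insert ⟨i + 1, h⟩ (Iic i) := by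
    ext l
    simp only [mem_Iic, mem_insert, Fin.le_def, Fin.ext_iff]
    omega
  rw [this, sum_insert (by simp [Fin.le_def]), add_sub_cancel_right]

theorem Fin.Iic_eq_filter_lt (k : Fin n) :
    Finset.Iic k = ({c : Fin n | c.val < k + 1} : Finset (Fin n)) := by
  ext c
  simp only [mem_Iic, mem_filter, mem_univ, true_and, Fin.le_def]
  omega

theorem Fin.univ_eq_filter_lt :
    (univ : Finset (Fin n)) = ({c : Fin n | c.val < n} : Finset (Fin n)) := by
  ext c
  simp

theorem Fin.Iic_eq_univ {i : Fin n} (hi : (i : ℕ) = n - 1) : Finset.Iic i = univ := by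
  ext l
  simp only [mem_Iic, mem_univ, iff_true, Fin.le_def]
  omega

theorem Fin.exists_eq_mk_zero_or_mk_add_one (r : Fin n) :
    (∃ h : 0 < n, r = ⟨0, h⟩) ∨ ∃ (p : Fin n) (h : (p : ℕ) + 1 < n), r = ⟨p + 1, h⟩ := by
  rcases Nat.eq_zero_or_pos (r : ℕ) with h0 | hpos
  · exact .inl ⟨by omega, Fin.ext h0⟩
  · exact .inr ⟨⟨r - 1, by omega⟩, by simp; omega, Fin.ext (by simp; omega)⟩

end Fin

section PartialColumnSums

variable {n : ℕ} {a : Matrix (Fin n) (Fin n) ℤ} {t : (i : Fin n) → Fin ((i : ℕ) + 1) → ℕ}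

theorem AssocTriangle.strictMono (hat : AssocTriangle a t) (i : Fin n) : StrictMono (t i) :=
  fun _ _ => hat.1 i _ _

theorem AssocTriangle.card_filter_le_eq_sum (hat : AssocTriangle a t)
    (hcol : ∀ c i, ∑ l ∈ Iic i, a l c = 0 ∨ ∑ l ∈ Iic i, a l c = 1)
    (hbound : ∀ i j, 1 ≤ t i j ∧ t i j ≤ n) (i : Fin n) (m : ℕ) :
    (#{j | t i j ≤ m} : ℤ) = ∑ c : Fin n with c.val < m, ∑ l ∈ Iic i, a l c := by
  rw [sum_eq_card_filter_eq_one fun c _ => hcol c i, filter_filter,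
    ← card_filter_exists_eq_add_one (hat.strictMono i).injective (hbound i) m]
  simp_rw [hat.2 i]

theorem AssocTriangle.sum_row_zero_eq_card (hat : AssocTriangle a t)
    (hcol : ∀ c i, ∑ l ∈ Iic i, a l c = 0 ∨ ∑ l ∈ Iic i, a l c = 1)
    (hbound : ∀ i j, 1 ≤ t i j ∧ t i j ≤ n) (h : 0 < n) (m : ℕ) :
    ∑ c : Fin n with c.val < m, a ⟨0, h⟩ c = #{j | t ⟨0, h⟩ j ≤ m} := by
  rw [hat.card_filter_le_eq_sum hcol hbound]
  simp_rw [Fin.sum_Iic_mk_zero]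

theorem AssocTriangle.sum_row_add_one_eq_card_sub (hat : AssocTriangle a t)
    (hcol : ∀ c i, ∑ l ∈ Iic i, a l c = 0 ∨ ∑ l ∈ Iic i, a l c = 1)
    (hbound : ∀ i j, 1 ≤ t i j ∧ t i j ≤ n) (i : Fin n) (h : (i : ℕ) + 1 < n) (m : ℕ) :
    ∑ c : Fin n with c.val < m, a ⟨i + 1, h⟩ c =
      #{j : Fin (i + 1 + 1) | t ⟨i + 1, h⟩ j ≤ m} - #{j | t i j ≤ m} := by
  have hrow (c : Fin n) : a ⟨i + 1, h⟩ c = ∑ l ∈ Iic ⟨i + 1, h⟩, a l c - ∑ l ∈ Iic i, a l c :=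
    (Fin.sum_Iic_mk_add_one_sub (fun l => a l c) i h).symm
  rw [sum_congr rfl fun c _ => hrow c, sum_sub_distrib, ← hat.card_filter_le_eq_sum hcol hbound,
    ← hat.card_filter_le_eq_sum hcol hbound]

theorem AssocTriangle.matrix_eq {a' : Matrix (Fin n) (Fin n) ℤ} (hat : AssocTriangle a t)
    (hat' : AssocTriangle a' t)
    (hcol : ∀ c i, ∑ l ∈ Iic i, a l c = 0 ∨ ∑ l ∈ Iic i, a l c = 1)
    (hcol' : ∀ c i, ∑ l ∈ Iic i, a' l c = 0 ∨ ∑ l ∈ Iic i, a' l c = 1) : a = a' := by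
  have hcolumn (c : Fin n) : (fun l => a l c) = fun l => a' l c := eq_of_sum_Iic_eq fun i => by
    have hiff := (hat.2 i c).trans (hat'.2 i c).symm
    rcases hcol c i with h | h <;> rcases hcol' c i with h' | h' <;> simp_all
  ext i c
  exact congrFun (hcolumn c) i

def rowSet (a : Matrix (Fin n) (Fin n) ℤ) (i : Fin n) : Finset ℕ :=
  ({c | ∑ l ∈ Iic i, a l c = 1} : Finset (Fin n)).image fun c : Fin n => (c : ℕ) + 1

theorem add_one_mem_rowSet_iff (i c : Fin n) :
    (c : ℕ) + 1 ∈ rowSet a i ↔ ∑ l ∈ Iic i, a l c = 1 := by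
  simp [rowSet, Fin.val_inj]

end PartialColumnSums

namespace IsASM

variable {n : ℕ} {a : Matrix (Fin n) (Fin n) ℤ} {t : (i : Fin n) → Fin ((i : ℕ) + 1) → ℕ}

/-- The partial column sums down to row `i` are `0` or `1` and add up to `i + 1`. -/
theorem card_rowSet (ha : IsASM a) (i : Fin n) : #(rowSet a i) = i + 1 := by
  have hsum : ∑ c, ∑ l ∈ Iic i, a l c = (i : ℤ) + 1 := by
    rw [sum_comm, sum_congr rfl fun l _ => ha.2.2.1 l, sum_const, Fin.card_Iic]
    simp
  rw [sum_eq_card_filter_eq_one fun c _ => ha.2.2.2.1 c i] at hsum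
  rw [rowSet, card_image_of_injective _ fun c c' h => Fin.ext (by simpa using h)]
  exact_mod_cast hsum

theorem image_eq_rowSet (ha : IsASM a) (hat : AssocTriangle a t) (i : Fin n) :
    univ.image (t i) = rowSet a i := by
  symm
  refine eq_of_subset_of_card_le (fun x hx => ?_) ?_
  · obtain ⟨c, hc, rfl⟩ := mem_image.1 hx
    obtain ⟨j, hj⟩ := (hat.2 i c).1 (mem_filter.1 hc).2
    exact mem_image.2 ⟨j, mem_univ j, hj⟩
  · rw [card_image_of_injective _ (hat.strictMono i).injective, card_univ, Fintype.card_fin,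
      ha.card_rowSet]

theorem eq_orderEmbOfFin (ha : IsASM a) (hat : AssocTriangle a t) (i : Fin n) :
    t i = (rowSet a i).orderEmbOfFin (ha.card_rowSet i) :=
  orderEmbOfFin_unique _ (fun j => ha.image_eq_rowSet hat i ▸ mem_image_of_mem _ (mem_univ j))
    (hat.strictMono i)

theorem existsUnique_assocTriangle (ha : IsASM a) : ∃! t, AssocTriangle a t := by
  refine ⟨fun i => (rowSet a i).orderEmbOfFin (ha.card_rowSet i), ⟨fun i _ _ h =>
    OrderEmbedding.strictMono _ h, fun i c => ?_⟩, fun t hat => funext (ha.eq_orderEmbOfFin hat)⟩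
  rw [← add_one_mem_rowSet_iff, ← Finset.mem_coe, ← range_orderEmbOfFin _ (ha.card_rowSet i)]
  rfl

theorem one_le_and_le_of_assocTriangle (ha : IsASM a) (hat : AssocTriangle a t) (i : Fin n)
    (j : Fin ((i : ℕ) + 1)) : 1 ≤ t i j ∧ t i j ≤ n := by
  have := ha.image_eq_rowSet hat i ▸ mem_image_of_mem (t i) (mem_univ j)
  obtain ⟨c, -, hc⟩ := mem_image.1 this
  have := c.isLt
  omega

theorem sum_row_lt_eq_zero_or_one (ha : IsASM a) (i : Fin n) (m : ℕ) :
    ∑ c : Fin n with c.val < m, a i c = 0 ∨ ∑ c : Fin n with c.val < m, a i c = 1 := by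
  rcases Nat.eq_zero_or_pos m with rfl | hm
  · simp
  · have := i.isLt
    have hIic :
        ({c : Fin n | c.val < m} : Finset (Fin n)) = Iic ⟨min (m - 1) (n - 1), by omega⟩ := by
      ext c
      simp only [mem_filter, mem_univ, true_and, mem_Iic, Fin.le_def]
      omega
    rw [hIic]
    exact ha.2.1 i _

theorem assocTriangle_last_row_eq (ha : IsASM a) (hat : AssocTriangle a t) (i : Fin n)
    (hi : (i : ℕ) = n - 1) (j : Fin ((i : ℕ) + 1)) : t i j = j + 1 := by
  have hmem (j : Fin ((i : ℕ) + 1)) : (j : ℕ) + 1 ∈ rowSet a i := by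
    have := j.isLt
    rw [add_one_mem_rowSet_iff i ⟨j, by omega⟩, Fin.Iic_eq_univ hi]
    exact ha.2.2.2.2 _
  rw [ha.eq_orderEmbOfFin hat i,
    ← orderEmbOfFin_unique (ha.card_rowSet i) hmem fun _ _ h => Nat.add_lt_add_right h 1]

end IsASM

theorem AssocTriangle.isMonotoneTriangle {n : ℕ} {a : Matrix (Fin n) (Fin n) ℤ}
    {t : (i : Fin n) → Fin ((i : ℕ) + 1) → ℕ} (hat : AssocTriangle a t) (ha : IsASM a) :
    IsMonotoneTriangle t := by
  have hbound := ha.one_le_and_le_of_assocTriangle hat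
  refine ⟨hat.1, fun i h => ?_, ha.assocTriangle_last_row_eq hat⟩
  refine ((hat.strictMono i).interlace_iff_card_filter_le (hat.strictMono ⟨i + 1, h⟩)).2 fun m => ?_
  have hrow := hat.sum_row_add_one_eq_card_sub ha.2.2.2.1 hbound i h m
  rcases ha.sum_row_lt_eq_zero_or_one ⟨i + 1, h⟩ m with h0 | h1 <;> omega

section OfTriangle

variable {n : ℕ} {t : (i : Fin n) → Fin ((i : ℕ) + 1) → ℕ}

/-- The partial column sums of `ofTriangle t`, shifted by one row so that row `0` is the empty
sum: row `i.succ` is the indicator of the entries of row `i` of `t`. -/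
def triangleIndicator (t : (i : Fin n) → Fin ((i : ℕ) + 1) → ℕ) : Fin (n + 1) → Fin n → ℤ :=
  Fin.cases 0 fun i c => if ∃ j, t i j = c + 1 then 1 else 0

def ofTriangle (t : (i : Fin n) → Fin ((i : ℕ) + 1) → ℕ) : Matrix (Fin n) (Fin n) ℤ :=
  Matrix.of fun i c => triangleIndicator t i.succ c - triangleIndicator t i.castSucc c

theorem triangleIndicator_eq_zero_or_one (r : Fin (n + 1)) (c : Fin n) :
    triangleIndicator t r c = 0 ∨ triangleIndicator t r c = 1 := by
  cases r using Fin.cases <;> simp only [triangleIndicator, Fin.cases_zero, Fin.cases_succ]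
  · simp
  · split_ifs <;> simp

theorem sum_Iic_ofTriangle (i c : Fin n) :
    ∑ l ∈ Iic i, ofTriangle t l c = if ∃ j, t i j = c + 1 then 1 else 0 :=
  (Fin.sum_Iic_sub i fun r => triangleIndicator t r c).trans (by simp [triangleIndicator])

theorem sum_Iic_ofTriangle_eq_zero_or_one (c i : Fin n) :
    ∑ l ∈ Iic i, ofTriangle t l c = 0 ∨ ∑ l ∈ Iic i, ofTriangle t l c = 1 := by
  rw [sum_Iic_ofTriangle]
  split_ifs <;> simp

theorem assocTriangle_ofTriangle (hmono : ∀ i, StrictMono (t i)) :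
    AssocTriangle (ofTriangle t) t :=
  ⟨fun i _ _ h => hmono i h, fun i c => by rw [sum_Iic_ofTriangle]; split_ifs <;> simp_all⟩

end OfTriangle

namespace IsMonotoneTriangle

variable {n : ℕ} {t : (i : Fin n) → Fin ((i : ℕ) + 1) → ℕ}

theorem strictMono (ht : IsMonotoneTriangle t) (i : Fin n) : StrictMono (t i) :=
  fun _ _ => ht.1 i _ _

theorem one_le_and_le (ht : IsMonotoneTriangle t) (i : Fin n) (j : Fin ((i : ℕ) + 1)) :
    1 ≤ t i j ∧ t i j ≤ n := by
  suffices ∀ d (i : Fin n), (i : ℕ) + d = n - 1 → ∀ j, 1 ≤ t i j ∧ t i j ≤ n from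
    this (n - 1 - i) i (by omega) j
  intro d
  induction d with
  | zero =>
    intro i hi j
    rw [ht.2.2 i (by omega) j]
    omega
  | succ d ih =>
    intro i hi j
    have h : (i : ℕ) + 1 < n := by omega
    have hnext := ih ⟨i + 1, h⟩ (by simp only; omega)
    exact ⟨(hnext _).1.trans (ht.2.1 i h j).1, (ht.2.1 i h j).2.trans (hnext _).2⟩

theorem card_filter_le_n (ht : IsMonotoneTriangle t) (i : Fin n) : #{j | t i j ≤ n} = i + 1 := by
  rw [filter_true_of_mem fun j _ => (ht.one_le_and_le i j).2, card_univ, Fintype.card_fin]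

theorem sum_row_ofTriangle_lt_eq_zero_or_one (ht : IsMonotoneTriangle t) (r : Fin n) (m : ℕ) :
    ∑ c : Fin n with c.val < m, ofTriangle t r c = 0 ∨
      ∑ c : Fin n with c.val < m, ofTriangle t r c = 1 := by
  have hat := assocTriangle_ofTriangle ht.strictMono
  rcases r.exists_eq_mk_zero_or_mk_add_one with ⟨h, rfl⟩ | ⟨i, h, rfl⟩
  · rw [hat.sum_row_zero_eq_card sum_Iic_ofTriangle_eq_zero_or_one ht.one_le_and_le h m]
    have : #{j | t ⟨0, h⟩ j ≤ m} ≤ 1 := (Finset.card_filter_le _ _).trans_eq (card_fin _)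
    omega
  · rw [hat.sum_row_add_one_eq_card_sub sum_Iic_ofTriangle_eq_zero_or_one ht.one_le_and_le i h m]
    have := ((ht.strictMono i).interlace_iff_card_filter_le (ht.strictMono ⟨i + 1, h⟩)).1
      (ht.2.1 i h) m
    omega

theorem sum_row_ofTriangle_eq_one (ht : IsMonotoneTriangle t) (r : Fin n) :
    ∑ c, ofTriangle t r c = 1 := by
  have hat := assocTriangle_ofTriangle ht.strictMono
  rw [Fin.univ_eq_filter_lt]
  rcases r.exists_eq_mk_zero_or_mk_add_one with ⟨h, rfl⟩ | ⟨i, h, rfl⟩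
  · rw [hat.sum_row_zero_eq_card sum_Iic_ofTriangle_eq_zero_or_one ht.one_le_and_le h n,
      ht.card_filter_le_n]
    simp
  · rw [hat.sum_row_add_one_eq_card_sub sum_Iic_ofTriangle_eq_zero_or_one ht.one_le_and_le i h n]
    have hnext : #{j : Fin (i + 1 + 1) | t ⟨i + 1, h⟩ j ≤ n} = i + 1 + 1 :=
      ht.card_filter_le_n ⟨i + 1, h⟩
    rw [hnext, ht.card_filter_le_n]
    push_cast
    ring

theorem isASM_ofTriangle (ht : IsMonotoneTriangle t) : IsASM (ofTriangle t) := by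
  refine ⟨fun i c => ?_, fun i k => ?_, ht.sum_row_ofTriangle_eq_one,
    sum_Iic_ofTriangle_eq_zero_or_one, fun c => ?_⟩
  · simp only [ofTriangle, Matrix.of_apply]
    rcases triangleIndicator_eq_zero_or_one (t := t) i.succ c with h | h <;>
      rcases triangleIndicator_eq_zero_or_one (t := t) i.castSucc c with h' | h' <;> simp [h, h']
  · rw [Fin.Iic_eq_filter_lt]
    exact ht.sum_row_ofTriangle_lt_eq_zero_or_one i _
  · have hn : 0 < n := c.pos
    rw [← Fin.Iic_eq_univ (i := ⟨n - 1, by omega⟩) rfl, sum_Iic_ofTriangle,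
      if_pos ⟨⟨c, by simp; omega⟩, ht.2.2 _ rfl _⟩]

end IsMonotoneTriangle

theorem asm_monotone_triangle_bijection (n : ℕ) :
    (∀ a : Matrix (Fin n) (Fin n) ℤ, IsASM a →
      ∃! t : (i : Fin n) → Fin ((i : ℕ) + 1) → ℕ, AssocTriangle a t) ∧
    (∀ a : Matrix (Fin n) (Fin n) ℤ, IsASM a →
      ∀ t : (i : Fin n) → Fin ((i : ℕ) + 1) → ℕ, AssocTriangle a t →
        IsMonotoneTriangle t) ∧
    (∀ t : (i : Fin n) → Fin ((i : ℕ) + 1) → ℕ, IsMonotoneTriangle t →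
      ∃! a : Matrix (Fin n) (Fin n) ℤ, IsASM a ∧ AssocTriangle a t) :=
  ⟨fun _ ha => ha.existsUnique_assocTriangle,
    fun _ ha _ hat => hat.isMonotoneTriangle ha,
    fun t ht => ⟨ofTriangle t, ⟨ht.isASM_ofTriangle, assocTriangle_ofTriangle ht.strictMono⟩,
      fun _ ⟨ha, hat⟩ => hat.matrix_eq (assocTriangle_ofTriangle ht.strictMono)
        ha.2.2.2.1 sum_Iic_ofTriangle_eq_zero_or_one⟩⟩
end
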